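/- arXiv:0810.0794 — 2 statements merged into one kernel-verified Lean document; each statement's English description precedes it below -/
import Mathlib

section
/- If π : 𝟙 → e is an idempotent arrow in a monoidal category M, then the two morphisms e → e ⊗ e given by (π ⊗ id_e) ∘ λ_e⁻¹ and (id_e ⊗ π) ∘ ρ_e⁻¹ are equal, i.e., the diagram formed by the left and right unitor inverses of e followed by π ⊗ id_e and id_e ⊗ π commutes. -/
/-!
Both composites agree after precomposing with `π`, by naturality of the unitors and the interchange
law. Precomposition with `π` is injective on maps `e ⟶ e ⊗ e`: whiskering `π ≫ f = π ≫ g` by `e`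
and cancelling the epimorphism `e ◁ π` gives `e ◁ f = e ◁ g`, and the interchange law turns this
into `𝟙_ ◁ f = 𝟙_ ◁ g` after cancelling `π ▷ (e ⊗ e)`, an isomorphism because up to associators
it is `(π ▷ e) ▷ e`.
-/

open CategoryTheory MonoidalCategory

namespace CategoryTheory.MonoidalCategory

variable {M : Type*} [Category M] [MonoidalCategory M]

theorem eq_of_unit_comp_eq {e Y : M} (π : 𝟙_ M ⟶ e) [Epi (e ◁ π)] [Mono (π ▷ Y)]
    {f g : e ⟶ Y} (h : π ≫ f = π ≫ g) : f = g := by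
  have hwhisker : e ◁ f = e ◁ g := by
    rw [← cancel_epi (e ◁ π), ← whiskerLeft_comp, h, whiskerLeft_comp]
  rw [← whiskerLeft_iff, ← cancel_mono (π ▷ Y), whisker_exchange, whisker_exchange, hwhisker]

theorem comp_leftUnitor_inv_whiskerRight_eq_comp_rightUnitor_inv_whiskerLeft {e : M}
    (π : 𝟙_ M ⟶ e) : π ≫ (λ_ e).inv ≫ π ▷ e = π ≫ (ρ_ e).inv ≫ e ◁ π := by
  rw [leftUnitor_inv_naturality_assoc, rightUnitor_inv_naturality_assoc, whisker_exchange,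
    unitors_inv_equal]

instance isIso_whiskerRight_tensor {X X' : M} (f : X ⟶ X') (Y Z : M) [IsIso (f ▷ Y)] :
    IsIso (f ▷ (Y ⊗ Z)) := by
  rw [whiskerRight_tensor]
  infer_instance

end CategoryTheory.MonoidalCategory

/-- If `π : 𝟙 → e` is an idempotent arrow in a monoidal category `M`,
then `(π ⊗ id_e) ∘ λ_e⁻¹ = (id_e ⊗ π) ∘ ρ_e⁻¹ : e → e ⊗ e`. -/
theorem stmt_3 {M : Type*} [Category M] [MonoidalCategory M]
    (e : M) (π : 𝟙_ M ⟶ e) (hπr : IsIso (π ▷ e)) (hπl : IsIso (e ◁ π)) :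
    (λ_ e).inv ≫ (π ▷ e) = (ρ_ e).inv ≫ (e ◁ π) :=
  eq_of_unit_comp_eq π (comp_leftUnitor_inv_whiskerRight_eq_comp_rightUnitor_inv_whiskerLeft π)
end

section
/- If e is a closed idempotent in a monoidal category M, then the functor M → eM given by X ↦ e ⊗ X is left adjoint to the inclusion functor eM → M, where eM is the full subcategory of M consisting of objects X with e ⊗ X ≅ X. -/
/-!
The unit `η_X = (λ_ X).inv ≫ π ▷ X : X ⟶ e ⊗ X` is invertible exactly on `eM`,
because `π ▷ (e ⊗ X)` is invertible as soon as `π ▷ e` is. The two maps `e ⟶ e ⊗ e`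
built from `π` agree after precomposition with `π` by the interchange law; cancelling
the epimorphism `e ◁ π` and then, by naturality of `η`, the isomorphism `η_{e ⊗ e}`
shows that they agree. Hence `η_{e ⊗ X} = e ◁ η_X`, which is the triangle identity for
the unit `η` and the counit `η⁻¹` on `eM`.
-/

open CategoryTheory MonoidalCategory

namespace CategoryTheory.MonoidalCategory

variable {M : Type*} [Category M] [MonoidalCategory M]

lemma isIso_whiskerRight_tensor_s11 {A B : M} (f : A ⟶ B) (Y Z : M) [IsIso (f ▷ Y)] :
    IsIso (f ▷ (Y ⊗ Z)) := by
  rw [whiskerRight_tensor]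
  infer_instance

lemma isIso_whiskerRight_of_iso {A B Y Z : M} (f : A ⟶ B) (i : Y ≅ Z) [IsIso (f ▷ Y)] :
    IsIso (f ▷ Z) := by
  rw [← Iso.inv_hom_id_assoc (whiskerLeftIso A i) (f ▷ Z), whiskerLeftIso_hom,
    whisker_exchange]
  infer_instance

abbrev tensorLeftFixed (e : M) : ObjectProperty M := fun X => Nonempty (e ⊗ X ≅ X)

variable {e : M} (π : 𝟙_ M ⟶ e)

lemma isIso_whiskerRight_iff_tensorLeftFixed [IsIso (π ▷ e)] (X : M) :
    IsIso (π ▷ X) ↔ tensorLeftFixed e X := by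
  refine ⟨fun _ => ⟨(asIso (π ▷ X)).symm ≪≫ λ_ X⟩, fun ⟨i⟩ => ?_⟩
  have := isIso_whiskerRight_tensor_s11 π e X
  exact isIso_whiskerRight_of_iso π i

lemma tensorLeftFixed_tensor [IsIso (π ▷ e)] (X : M) : tensorLeftFixed e (e ⊗ X) :=
  have := isIso_whiskerRight_tensor_s11 π e X
  (isIso_whiskerRight_iff_tensorLeftFixed π _).1 this

instance [IsIso (π ▷ e)] (Y : (tensorLeftFixed e).FullSubcategory) : IsIso (π ▷ Y.obj) :=
  (isIso_whiskerRight_iff_tensorLeftFixed π _).2 Y.property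

def closedIdempotentUnit : 𝟭 M ⟶ tensorLeft e :=
  (leftUnitorNatIso M).inv ≫ (tensoringLeft M).map π

@[simp]
lemma closedIdempotentUnit_app (X : M) :
    (closedIdempotentUnit π).app X = (λ_ X).inv ≫ π ▷ X := rfl

instance {X : M} [IsIso (π ▷ X)] : IsIso ((closedIdempotentUnit π).app X) := by
  rw [closedIdempotentUnit_app]
  infer_instance

lemma leftUnitor_inv_comp_whiskerRight_eq_rightUnitor_inv_comp_whiskerLeft
    [IsIso (π ▷ e)] [IsIso (e ◁ π)] :
    (λ_ e).inv ≫ π ▷ e = (ρ_ e).inv ≫ e ◁ π := by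
  have hπ : π ≫ (λ_ e).inv ≫ π ▷ e = π ≫ (ρ_ e).inv ≫ e ◁ π :=
    calc π ≫ (λ_ e).inv ≫ π ▷ e = (λ_ _).inv ≫ (𝟙_ M ◁ π ≫ π ▷ e) := by simp
      _ = (ρ_ _).inv ≫ (π ▷ 𝟙_ M ≫ e ◁ π) := by rw [whisker_exchange, unitors_inv_equal]
      _ = π ≫ (ρ_ e).inv ≫ e ◁ π := by simp
  have he : e ◁ ((λ_ e).inv ≫ π ▷ e) = e ◁ ((ρ_ e).inv ≫ e ◁ π) := by
    rw [← cancel_epi (e ◁ π), ← whiskerLeft_comp, ← whiskerLeft_comp, hπ]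
  have := isIso_whiskerRight_tensor_s11 π e e
  rw [← cancel_mono ((closedIdempotentUnit π).app (e ⊗ e))]
  calc _ = (closedIdempotentUnit π).app e ≫ e ◁ ((λ_ e).inv ≫ π ▷ e) :=
        (closedIdempotentUnit π).naturality _
    _ = (closedIdempotentUnit π).app e ≫ e ◁ ((ρ_ e).inv ≫ e ◁ π) := by rw [he]
    _ = _ := ((closedIdempotentUnit π).naturality _).symm

lemma closedIdempotentUnit_app_tensor [IsIso (π ▷ e)] [IsIso (e ◁ π)] (X : M) :
    (closedIdempotentUnit π).app (e ⊗ X) = e ◁ (closedIdempotentUnit π).app X :=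
  calc _ = ((λ_ e).inv ≫ π ▷ e) ▷ X ≫ (α_ e e X).hom := by
        rw [closedIdempotentUnit_app]; monoidal
    _ = ((ρ_ e).inv ≫ e ◁ π) ▷ X ≫ (α_ e e X).hom := by
        rw [leftUnitor_inv_comp_whiskerRight_eq_rightUnitor_inv_comp_whiskerLeft]
    _ = _ := by rw [closedIdempotentUnit_app]; monoidal

def closedIdempotentReflector [IsIso (π ▷ e)] : M ⥤ (tensorLeftFixed e).FullSubcategory :=
  ObjectProperty.lift _ (tensorLeft e) (tensorLeftFixed_tensor π)

noncomputable def closedIdempotentAdjunction [IsIso (π ▷ e)] [IsIso (e ◁ π)] :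
    closedIdempotentReflector π ⊣ (tensorLeftFixed e).ι where
  unit := closedIdempotentUnit π
  counit :=
    { app Y := ObjectProperty.homMk (asIso ((closedIdempotentUnit π).app Y.obj)).inv
      naturality Y Y' g := by
        ext
        change e ◁ g.hom ≫ inv _ = inv _ ≫ g.hom
        rw [IsIso.comp_inv_eq, Category.assoc, IsIso.eq_inv_comp]
        exact ((closedIdempotentUnit π).naturality g.hom).symm }
  left_triangle_components X := by
    have := isIso_whiskerRight_tensor_s11 π e X
    ext
    change e ◁ (closedIdempotentUnit π).app X ≫
      inv ((closedIdempotentUnit π).app (e ⊗ X)) = 𝟙 _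
    rw [← closedIdempotentUnit_app_tensor, IsIso.hom_inv_id]
  right_triangle_components Y := (asIso ((closedIdempotentUnit π).app Y.obj)).hom_inv_id

end CategoryTheory.MonoidalCategory

/-- If `e` is a closed idempotent in a monoidal category `M` (i.e.
there is an idempotent arrow `π : 𝟙 → e`), then the functor `M → eM`, `X ↦ e ⊗ X`,
is left adjoint to the inclusion of the full subcategory `eM` of objects `X` with
`e ⊗ X ≅ X`. -/
theorem stmt_11 {M : Type*} [Category M] [MonoidalCategory M]
    (e : M) (π : 𝟙_ M ⟶ e) (hπr : IsIso (π ▷ e)) (hπl : IsIso (e ◁ π)) :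
    ∃ L : M ⥤ ObjectProperty.FullSubcategory (fun X : M => Nonempty (e ⊗ X ≅ X)),
      Nonempty (L ⋙ ObjectProperty.ι (fun X : M => Nonempty (e ⊗ X ≅ X)) ≅
        tensorLeft e) ∧
      Nonempty (L ⊣ ObjectProperty.ι (fun X : M => Nonempty (e ⊗ X ≅ X))) :=
  ⟨closedIdempotentReflector π, ⟨ObjectProperty.liftCompιIso _ _ _⟩,
    ⟨closedIdempotentAdjunction π⟩⟩
end
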